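/- arXiv:2007.10914 — 4 statements merged into one kernel-verified Lean document; each statement's English description precedes it below -/
import Mathlib

section
/- Let N, n, k be positive integers, X : Fin n → M_N(ℂ) an n-tuple of matrices, ℓ : Fin k → Fin n a word, i ∈ Fin n, and a, b, c, d ∈ Fin N. Define g : ℂ → ℂ by g(t) = (∏_{r=0}^{k−1} (X_{ℓ(r)} + t·δ_{ℓ(r),i}·E(b,c)))_{a d}, the product taken in increasing order of r. Then g has derivative at t = 0 equal to Σ_{r : ℓ(r)=i} (∏_{s<r} X_{ℓ(s)})_{a b} · (∏_{s>r} X_{ℓ(s)})_{c d}. (This realizes the abstract noncommutative derivative ∂^{x_i} on matrices: [(∂^{X_i}Q)(X)]_{ab;cd} = ∂[Q(X)]_{ad}/∂(X_i)_{bc}.) -/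
/-!
Leibniz rule: the derivative at `0` of `t ↦ ∏_r (M_r + t • B_r)` is
`∑_r (∏_{s<r} M_s) * B_r * (∏_{s>r} M_s)`. For `B_r = δ_{ℓ(r),i} • E(b,c)` the `(a,d)` entry of the
`r`-th term is `δ_{ℓ(r),i} (∏_{s<r} M_s)_{ab} (∏_{s>r} M_s)_{cd}`.
-/

open Matrix

theorem List.filter_finRange_lt {k : ℕ} (r : Fin k) :
    (List.finRange k).filter (· < r) = (List.finRange k).take r := by
  conv_lhs => rw [← List.take_append_drop r (List.finRange k)]
  rw [List.filter_append, List.filter_eq_self.2, List.filter_eq_nil_iff.2, List.append_nil]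
  · intro s hs
    obtain ⟨j, hj, rfl⟩ := List.mem_drop_iff_getElem.1 hs
    simp [Fin.le_def]
  · intro s hs
    obtain ⟨j, hj, rfl⟩ := List.mem_take_iff_getElem.1 hs
    simp [Fin.lt_def]
    omega

theorem List.filter_finRange_gt {k : ℕ} (r : Fin k) :
    (List.finRange k).filter (r < ·) = (List.finRange k).drop (r + 1) := by
  conv_lhs => rw [← List.take_append_drop (r + 1) (List.finRange k)]
  rw [List.filter_append, List.filter_eq_nil_iff.2, List.nil_append, List.filter_eq_self.2]
  · intro s hs
    obtain ⟨j, hj, rfl⟩ := List.mem_drop_iff_getElem.1 hs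
    simp [Fin.lt_def]
    omega
  · intro s hs
    obtain ⟨j, hj, rfl⟩ := List.mem_take_iff_getElem.1 hs
    simp [Fin.le_def]
    omega

section ListProd

variable {𝕜 𝔸 ι : Type*} [NontriviallyNormedField 𝕜] [NormedRing 𝔸] [NormedAlgebra 𝕜 𝔸]

theorem hasDerivAt_list_prod_add_smul (M B : ι → 𝔸) (l : List ι) :
    HasDerivAt (fun t : 𝕜 => (l.map fun r => M r + t • B r).prod)
      (∑ j : Fin l.length, ((l.take j).map M).prod * B l[j] * ((l.drop (j + 1)).map M).prod) 0 := by
  induction l with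
  | nil => simpa using hasDerivAt_const (0 : 𝕜) (1 : 𝔸)
  | cons r l ih =>
    have hfactor : HasDerivAt (fun t : 𝕜 => M r + t • B r) (B r) 0 := by
      simpa using ((hasDerivAt_id (0 : 𝕜)).smul_const (B r)).const_add (M r)
    simp only [List.map_cons, List.prod_cons]
    convert hfactor.fun_mul ih using 1
    refine (Fin.sum_univ_succ (n := l.length) _).trans ?_
    simp [Finset.mul_sum, mul_assoc]

theorem hasDerivAt_finRange_prod_add_smul {k : ℕ} (M B : Fin k → 𝔸) :
    HasDerivAt (fun t : 𝕜 => ((List.finRange k).map fun r => M r + t • B r).prod)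
      (∑ r : Fin k, (((List.finRange k).filter (· < r)).map M).prod * B r *
        (((List.finRange k).filter (r < ·)).map M).prod) 0 := by
  convert hasDerivAt_list_prod_add_smul (𝕜 := 𝕜) M B (List.finRange k) using 1
  refine Fintype.sum_equiv (finCongr List.length_finRange.symm) _ _ fun r => ?_
  simp [List.filter_finRange_lt, List.filter_finRange_gt]

end ListProd

namespace Matrix

theorem mul_single_mul_apply {m n p q R : Type*} [Fintype n] [Fintype p] [DecidableEq n]
    [DecidableEq p] [NonUnitalNonAssocSemiring R] (P : Matrix m n R) (Q : Matrix p q R)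
    (a : m) (b : n) (c : p) (d : q) (x : R) :
    (P * single b c x * Q) a d = P a b * x * Q c d := by
  simp [mul_apply, single, ite_and, Finset.sum_ite_eq]

theorem hasDerivAt_finRange_prod_add_smul_apply {𝕜 m : Type*} [NontriviallyNormedField 𝕜]
    [CompleteSpace 𝕜] [Fintype m] [DecidableEq m] {k : ℕ} (M B : Fin k → Matrix m m 𝕜) (a d : m) :
    HasDerivAt (fun t : 𝕜 => ((List.finRange k).map fun r => M r + t • B r).prod a d)
      ((∑ r : Fin k, (((List.finRange k).filter (· < r)).map M).prod * B r *
        (((List.finRange k).filter (r < ·)).map M).prod) a d) 0 := by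
  -- Any submultiplicative norm would do: the statement only involves entries.
  open scoped Matrix.Norms.Operator in
  exact (entryLinearMap 𝕜 𝕜 a d).toContinuousLinearMap.hasFDerivAt.comp_hasDerivAt 0
    (hasDerivAt_finRange_prod_add_smul M B)

end Matrix

theorem stmt0_general (N n k : ℕ)
    (X : Fin n → Matrix (Fin N) (Fin N) ℂ) (ℓ : Fin k → Fin n) (i : Fin n)
    (a b c d : Fin N) :
    HasDerivAt
      (fun t : ℂ =>
        (((List.finRange k).map (fun r =>
            X (ℓ r) + (t * (if ℓ r = i then (1 : ℂ) else 0)) •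
              Matrix.single b c (1 : ℂ))).prod) a d)
      (∑ r ∈ Finset.univ.filter (fun r : Fin k => ℓ r = i),
        ((((List.finRange k).filter (fun s => s < r)).map (fun s => X (ℓ s))).prod) a b *
          ((((List.finRange k).filter (fun s => r < s)).map (fun s => X (ℓ s))).prod) c d)
      0 := by
  have h := hasDerivAt_finRange_prod_add_smul_apply (fun r => X (ℓ r))
    (fun r => single b c (if ℓ r = i then (1 : ℂ) else 0)) a d
  simp only [Matrix.sum_apply, mul_single_mul_apply, mul_ite, ite_mul, mul_one, mul_zero,
    zero_mul] at h
  simpa only [mul_smul, smul_single, smul_eq_mul, mul_one, Finset.sum_filter] using h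

/-- The abstract noncommutative derivative `∂^{x_i}` realized on matrices:
the derivative at `t = 0` of the `(a,d)` entry of the monomial where `X_{ℓ(r)}` is perturbed
to `X_{ℓ(r)} + t·δ_{ℓ(r),i}·E(b,c)` equals
`Σ_{r : ℓ(r)=i} (∏_{s<r} X_{ℓ(s)})_{ab} · (∏_{s>r} X_{ℓ(s)})_{cd}`. -/
theorem stmt0 (N n k : ℕ) (hN : 0 < N) (hn : 0 < n) (hk : 0 < k)
    (X : Fin n → Matrix (Fin N) (Fin N) ℂ) (ℓ : Fin k → Fin n) (i : Fin n)
    (a b c d : Fin N) :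
    HasDerivAt
      (fun t : ℂ =>
        (((List.finRange k).map (fun r =>
            X (ℓ r) + (t * (if ℓ r = i then (1 : ℂ) else 0)) •
              Matrix.single b c (1 : ℂ))).prod) a d)
      (∑ r ∈ Finset.univ.filter (fun r : Fin k => ℓ r = i),
        ((((List.finRange k).filter (fun s => s < r)).map (fun s => X (ℓ s))).prod) a b *
          ((((List.finRange k).filter (fun s => r < s)).map (fun s => X (ℓ s))).prod) c d)
      0 :=
  stmt0_general N n k X ℓ i a b c d
end

section
/- Let N, n, k be positive integers, X : Fin n → M_N(ℂ) an n-tuple of matrices, ℓ : Fin k → Fin n a word, i ∈ Fin n, and b, c ∈ Fin N. Define f : ℂ → ℂ by f(t) = Tr(∏_{r=0}^{k−1} (X_{ℓ(r)} + t·δ_{ℓ(r),i}·E(b,c))). Then f has derivative at t = 0 equal to Σ_{r : ℓ(r)=i} (X_{ℓ(r+1)} ⋯ X_{ℓ(k−1)} · X_{ℓ(0)} ⋯ X_{ℓ(r−1)})_{c b}. In other words, the derivative of the trace of a matrix monomial with respect to the (b,c) entry of X_i equals the (c,b) entry of Voiculescu's cyclic derivative: ∂ Tr Q(X)/∂(X_i)_{bc}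 = [(𝒟^{x_i}Q)(X)]_{cb}, where 𝒟^{x_i}Q := Σ_{r : ℓ(r)=i} X_{ℓ(r+1)} ⋯ X_{ℓ(k−1)} X_{ℓ(0)} ⋯ X_{ℓ(r−1)}. -/
/-!
Each factor `X_{ℓ(r)} + t δ_{ℓ(r),i} E(b,c)` is affine in `t`, so the Leibniz rule for a
noncommutative product gives the derivative at `0` as the sum over positions `r` with `ℓ(r) = i`
of `X_{ℓ(0)} ⋯ X_{ℓ(r-1)} E(b,c) X_{ℓ(r+1)} ⋯ X_{ℓ(k-1)}`. The trace is linear, and by cyclicity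
`Tr (A E(b,c) B) = (B A)_{cb}`.
-/

open Matrix

theorem HasDerivAt.list_prod' {𝕜 𝔸 ι : Type*} [NontriviallyNormedField 𝕜] [NormedRing 𝔸]
    [NormedAlgebra 𝕜 𝔸] {l : List ι} {f : ι → 𝕜 → 𝔸} {f' : ι → 𝔸} {x : 𝕜}
    (h : ∀ i ∈ l, HasDerivAt (f i) (f' i) x) :
    HasDerivAt (fun t ↦ (l.map (f · t)).prod)
      (∑ i : Fin l.length,
        ((l.take i).map (f · x)).prod * f' l[i] * ((l.drop (i + 1)).map (f · x)).prod) x := by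
  convert (HasFDerivAt.list_prod' fun i hi ↦ (h i hi).hasFDerivAt).hasDerivAt using 1
  simp [mul_assoc]

namespace List

theorem finRange_filter_lt {k : ℕ} (r : Fin k) :
    (finRange k).filter (· < r) = (finRange k).take r := by
  conv_lhs => rw [← take_append_drop r (finRange k), filter_append]
  rw [filter_eq_self.2, filter_eq_nil_iff.2, append_nil] <;>
  · simp only [mem_iff_getElem]
    grind

theorem finRange_filter_gt {k : ℕ} (r : Fin k) :
    (finRange k).filter (r < ·) = (finRange k).drop (r + 1) := by
  conv_lhs => rw [← take_append_drop (r + 1) (finRange k), filter_append]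
  rw [filter_eq_nil_iff.2, filter_eq_self.2, nil_append] <;>
  · simp only [mem_iff_getElem]
    grind

end List

theorem Matrix.trace_mul_single_mul {m R : Type*} [Fintype m] [DecidableEq m] [CommSemiring R]
    (A B : Matrix m m R) (i j : m) (a : R) :
    trace (A * single i j a * B) = a * (B * A) j i := by
  rw [mul_assoc, trace_mul_comm, mul_assoc, trace_single_mul, smul_eq_mul]

-- `HasDerivAt` only sees the topology of `Matrix m m 𝕜`, so any of Mathlib's matrix norms will do.
open scoped Matrix.Norms.Elementwise in
theorem HasDerivAt.matrix_trace {m 𝕜 : Type*} [Fintype m] [NontriviallyNormedField 𝕜]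
    [CompleteSpace 𝕜] {f : 𝕜 → Matrix m m 𝕜} {f' : Matrix m m 𝕜} {x : 𝕜}
    (h : HasDerivAt f f' x) :
    HasDerivAt (fun t ↦ trace (f t)) (trace f') x :=
  (traceLinearMap m 𝕜 𝕜).toContinuousLinearMap.hasFDerivAt.comp_hasDerivAt x h

open scoped Matrix.Norms.Operator in
theorem stmt1_general (N n k : ℕ)
    (X : Fin n → Matrix (Fin N) (Fin N) ℂ) (ℓ : Fin k → Fin n) (i : Fin n)
    (b c : Fin N) :
    HasDerivAt
      (fun t : ℂ =>
        Matrix.trace (((List.finRange k).map (fun r =>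
          X (ℓ r) + (t * (if ℓ r = i then (1 : ℂ) else 0)) •
            Matrix.single b c (1 : ℂ))).prod))
      (∑ r ∈ Finset.univ.filter (fun r : Fin k => ℓ r = i),
        (((((List.finRange k).filter (fun s => r < s)).map (fun s => X (ℓ s))).prod) *
          ((((List.finRange k).filter (fun s => s < r)).map (fun s => X (ℓ s))).prod)) c b)
      0 := by
  set δ : Fin k → ℂ := fun r ↦ if ℓ r = i then 1 else 0
  have hfactor : ∀ r ∈ List.finRange k, HasDerivAt
      (fun t : ℂ ↦ X (ℓ r) + (t * δ r) • single b c (1 : ℂ)) (δ r • single b c (1 : ℂ)) 0 :=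
    fun r _ ↦ ((hasDerivAt_mul_const (δ r)).smul_const (single b c (1 : ℂ))).const_add (X (ℓ r))
  refine (HasDerivAt.list_prod' hfactor).matrix_trace.congr_deriv ?_
  rw [trace_sum, Finset.sum_filter]
  refine Fintype.sum_equiv (finCongr List.length_finRange) _ _ fun r ↦ ?_
  simp only [zero_mul, zero_smul, add_zero, smul_single, smul_eq_mul, mul_one,
    trace_mul_single_mul, List.finRange_filter_lt, List.finRange_filter_gt]
  simp [δ]

/-- The derivative of the trace of a matrix monomial with respect to the
`(b,c)` entry of `X_i` equals the `(c,b)` entry of Voiculescu's cyclic derivative: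
`∂ Tr Q(X)/∂(X_i)_{bc} = [(𝒟^{x_i}Q)(X)]_{cb}`. -/
theorem stmt1 (N n k : ℕ) (hN : 0 < N) (hn : 0 < n) (hk : 0 < k)
    (X : Fin n → Matrix (Fin N) (Fin N) ℂ) (ℓ : Fin k → Fin n) (i : Fin n)
    (b c : Fin N) :
    HasDerivAt
      (fun t : ℂ =>
        Matrix.trace (((List.finRange k).map (fun r =>
          X (ℓ r) + (t * (if ℓ r = i then (1 : ℂ) else 0)) •
            Matrix.single b c (1 : ℂ))).prod))
      (∑ r ∈ Finset.univ.filter (fun r : Fin k => ℓ r = i),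
        (((((List.finRange k).filter (fun s => r < s)).map (fun s => X (ℓ s))).prod) *
          ((((List.finRange k).filter (fun s => s < r)).map (fun s => X (ℓ s))).prod)) c b)
      0 :=
  stmt1_general N n k X ℓ i b c
end

section
/- Let N, n, k be positive integers with k ≥ 2, X : Fin n → M_N(ℂ), ℓ : Fin k → Fin n a word, i, j ∈ Fin n, and a, b, c, d ∈ Fin N. Define G : ℂ × ℂ → ℂ by G(s,t) = Tr(∏_{r=0}^{k−1} (X_{ℓ(r)} + s·δ_{ℓ(r),j}·E(d,a) + t·δ_{ℓ(r),i}·E(b,c))). Then the mixed second partial derivative ∂²G/∂s∂t at (0,0) equals the sum over all ordered pairs (u,v) with u ≠ v, ℓ(u) = j and ℓ(v) = i of (π₁)_{a b} · (π₂)_{c d}, where π₁ = X_{ℓ(u+1)} X_{ℓ(u+2)} ⋯ X_{ℓ(v−1)} and π₂ = X_{ℓ(v+1)} ⋯ X_{ℓ(u−1)}, the indices being taken cyclically modulo k and a cyclically empty run of letters giving the identity matrix. (This is the directed-pairing formula for the second noncommutative derivative ∂^{x_i} ∘ ∂^{x_j} of the trace of a monomial.) -/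
/-!
Write `F_r(s,t)` for the `r`-th factor. By the product rule, `∂_s` at `s = 0` replaces one factor,
at a position `u` with `ℓ(u) = j`, by `E(d,a)`; cyclicity of the trace turns that term into
`Tr (E(d,a) F_{u+1} ⋯ F_{u-1})`, a product along the cyclic arc after `u`. Differentiating the
arc in `t` at `t = 0` replaces one more letter, at `v ≠ u` with `ℓ(v) = i`, by `E(b,c)`, which
cuts the arc into the runs `π₁` and `π₂`; finally
`Tr (E(d,a) π₁ E(b,c) π₂) = (π₁)_{ab} (π₂)_{cd}`.
-/

open Matrix

/-- The ordered product of the letters `X_{ℓ(u+1)} X_{ℓ(u+2)} ⋯ X_{ℓ(v−1)}`, indices taken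
cyclically modulo `k`; a cyclically empty run of letters gives the identity matrix. -/
noncomputable def cycProd {N n k : ℕ} (X : Fin n → Matrix (Fin N) (Fin N) ℂ)
    (ℓ : Fin k → Fin n) (u v : Fin k) : Matrix (Fin N) (Fin N) ℂ :=
  ((List.range ((v.val + k - u.val) % k - 1)).map
      (fun s => X (ℓ ⟨(u.val + 1 + s) % k,
        Nat.mod_lt _ ((Nat.zero_le u.val).trans_lt u.isLt)⟩))).prod

open Finset

namespace Fin

variable {k : ℕ}

def cycShift (u : Fin k) (a : ℕ) : Fin k := ⟨(u + a) % k, Nat.mod_lt _ u.pos⟩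

def cycGap (u v : Fin k) : ℕ := (v + k - u) % k

@[simp] lemma cycShift_zero (u : Fin k) : u.cycShift 0 = u :=
  Fin.ext (Nat.mod_eq_of_lt u.isLt)

@[simp] lemma cycShift_card (u : Fin k) : u.cycShift k = u :=
  Fin.ext <| by simp [cycShift, Nat.mod_eq_of_lt u.isLt]

lemma cycShift_cycShift (u : Fin k) (a b : ℕ) :
    (u.cycShift a).cycShift b = u.cycShift (a + b) :=
  Fin.ext <| by simp [cycShift, Nat.add_assoc]

lemma cycGap_lt (u v : Fin k) : u.cycGap v < k := Nat.mod_lt _ u.pos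

lemma cycShift_cycGap (u v : Fin k) : u.cycShift (u.cycGap v) = v :=
  Fin.ext <| by
    have : u.val + (v.val + k - u.val) = v.val + k := by omega
    simp [cycShift, cycGap, this, Nat.mod_eq_of_lt v.isLt]

lemma cycGap_cycShift (u : Fin k) {w : ℕ} (hw : w < k) : u.cycGap (u.cycShift w) = w := by
  simp only [cycGap, cycShift]
  rcases lt_or_ge (u.val + w) k with h | h
  · rw [Nat.mod_eq_of_lt h, show u.val + w + k - u.val = w + k by omega, Nat.add_mod_right,
      Nat.mod_eq_of_lt hw]
  · rw [Nat.mod_eq_sub_mod h, Nat.mod_eq_of_lt (by omega : u.val + w - k < k),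
      show u.val + w - k + k - u.val = w by omega, Nat.mod_eq_of_lt hw]

lemma cycGap_eq_zero_iff (u v : Fin k) : u.cycGap v = 0 ↔ v = u := by
  constructor
  · intro h; rw [← u.cycShift_cycGap v, h, cycShift_zero]
  · rintro rfl; simp [cycGap]

lemma sum_range_pred_cycShift_succ {M : Type*} [AddCommMonoid M] {k : ℕ} (u : Fin k)
    (g : Fin k → M) :
    ∑ w ∈ range (k - 1), g (u.cycShift (w + 1)) = ∑ v ∈ univ.erase u, g v := by
  refine sum_nbij' (fun w => u.cycShift (w + 1)) (fun v => u.cycGap v - 1) ?_ ?_ ?_ ?_ ?_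
  · intro w hw
    have hw : w + 1 < k := by rw [mem_range] at hw; omega
    simp [← u.cycGap_eq_zero_iff, u.cycGap_cycShift hw]
  · intro v hv
    have := (u.cycGap_eq_zero_iff v).not.mpr (ne_of_mem_erase hv)
    have := u.cycGap_lt v
    rw [mem_range]; omega
  · intro w hw
    have hw : w + 1 < k := by rw [mem_range] at hw; omega
    simp [u.cycGap_cycShift hw]
  · intro v hv
    have := (u.cycGap_eq_zero_iff v).not.mpr (ne_of_mem_erase hv)
    rw [Nat.sub_add_cancel (by omega), cycShift_cycGap]
  · exact fun _ _ => rfl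

lemma sum_range_cycShift_succ {M : Type*} [AddCommMonoid M] {k : ℕ} (u : Fin k)
    (g : Fin k → M) :
    ∑ w ∈ range k, g (u.cycShift (w + 1)) = ∑ v, g v := by
  have h := sum_range_succ (fun w => g (u.cycShift (w + 1))) (k - 1)
  rw [Nat.sub_add_cancel u.pos, cycShift_card] at h
  rw [h, sum_range_pred_cycShift_succ, sum_erase_add _ _ (mem_univ u)]

end Fin

section CycArc

variable {M : Type*} [Monoid M] {k : ℕ}

def cycArc (A : Fin k → M) (u : Fin k) (m : ℕ) : M :=
  ((List.range m).map fun s => A ⟨(u.val + 1 + s) % k, Nat.mod_lt _ u.pos⟩).prod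

@[simp] lemma cycArc_zero (A : Fin k → M) (u : Fin k) : cycArc A u 0 = 1 := rfl

lemma cycArc_succ (A : Fin k → M) (u : Fin k) (m : ℕ) :
    cycArc A u (m + 1) = cycArc A u m * A (u.cycShift (m + 1)) := by
  simp only [cycArc, List.range_succ, List.map_append, List.prod_append, List.map_cons,
    List.map_nil, List.prod_cons, List.prod_nil, mul_one]
  congr 2
  exact Fin.ext (congrArg (· % k) (by omega : u.val + 1 + m = u.val + (m + 1)))

lemma cycArc_add (A : Fin k → M) (u : Fin k) (m p : ℕ) :
    cycArc A u (m + p) = cycArc A u m * cycArc A (u.cycShift m) p := by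
  induction p with
  | zero => simp
  | succ p ih =>
    rw [← Nat.add_assoc, cycArc_succ, ih, cycArc_succ, Fin.cycShift_cycShift, mul_assoc,
      Nat.add_assoc]

lemma list_prod_map_finRange_eq_cycArc (A : Fin k → M) (hk : 0 < k) :
    ((List.finRange k).map A).prod = cycArc A ⟨k - 1, Nat.sub_lt hk one_pos⟩ k := by
  refine congrArg List.prod (List.ext_getElem (by simp) fun s h _ => ?_)
  have hs : s < k := by simpa using h
  simp only [List.getElem_map, List.getElem_finRange, List.getElem_range]
  congr 1
  show (⟨s, hs⟩ : Fin k) = _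
  exact Fin.ext (by simp [show k - 1 + 1 = k by omega, Nat.mod_eq_of_lt hs])

end CycArc

section Derivatives

variable {𝕜 : Type*} [NontriviallyNormedField 𝕜] {k : ℕ}

theorem hasDerivAt_cycArc {𝔸 : Type*} [NormedRing 𝔸] [NormedAlgebra 𝕜 𝔸]
    {F : Fin k → 𝕜 → 𝔸} {F' : Fin k → 𝔸} {x : 𝕜}
    (hF : ∀ r, HasDerivAt (F r) (F' r) x) (u : Fin k) (m : ℕ) :
    HasDerivAt (fun y => cycArc (F · y) u m)
      (∑ w ∈ range m, cycArc (F · x) u w * F' (u.cycShift (w + 1))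
        * cycArc (F · x) (u.cycShift (w + 1)) (m - 1 - w)) x := by
  induction m with
  | zero => simpa using hasDerivAt_const x (1 : 𝔸)
  | succ m ih =>
    simp_rw [cycArc_succ]
    convert ih.fun_mul (hF (u.cycShift (m + 1))) using 1
    rw [sum_range_succ, sum_mul, Nat.add_sub_cancel, Nat.sub_self, cycArc_zero, mul_one]
    congr 1
    refine sum_congr rfl fun w hw => ?_
    have hw : w < m := mem_range.mp hw
    rw [show m - w = m - 1 - w + 1 by omega, cycArc_succ, Fin.cycShift_cycShift,
      show w + 1 + (m - 1 - w + 1) = m + 1 by omega, mul_assoc _ _ (F _ x)]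

attribute [local instance] Matrix.linftyOpNormedRing Matrix.linftyOpNormedAlgebra

variable [CompleteSpace 𝕜] {m : Type*} [Fintype m] [DecidableEq m]

theorem HasDerivAt.matrix_trace_s2 {f : 𝕜 → Matrix m m 𝕜} {f' : Matrix m m 𝕜} {x : 𝕜}
    (hf : HasDerivAt f f' x) : HasDerivAt (fun y => (f y).trace) f'.trace x :=
  (Matrix.traceLinearMap m 𝕜 𝕜).toContinuousLinearMap.hasFDerivAt.comp_hasDerivAt x hf

theorem hasDerivAt_trace_prod_finRange {F : Fin k → 𝕜 → Matrix m m 𝕜}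
    {F' : Fin k → Matrix m m 𝕜} {x : 𝕜} (hF : ∀ r, HasDerivAt (F r) (F' r) x) :
    HasDerivAt (fun y => ((List.finRange k).map (F · y)).prod.trace)
      (∑ v, (F' v * cycArc (F · x) v (k - 1)).trace) x := by
  rcases k.eq_zero_or_pos with rfl | hk
  · simpa using hasDerivAt_const x (1 : Matrix m m 𝕜).trace
  set u₀ : Fin k := ⟨k - 1, Nat.sub_lt hk one_pos⟩
  have rotate : ∀ w ∈ range k,
      (cycArc (F · x) u₀ w * F' (u₀.cycShift (w + 1))
        * cycArc (F · x) (u₀.cycShift (w + 1)) (k - 1 - w)).trace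
      = (F' (u₀.cycShift (w + 1)) * cycArc (F · x) (u₀.cycShift (w + 1)) (k - 1)).trace := by
    intro w hw
    have hw : w < k := mem_range.mp hw
    have hwrap : (u₀.cycShift (w + 1)).cycShift (k - 1 - w) = u₀ := by
      rw [Fin.cycShift_cycShift, show w + 1 + (k - 1 - w) = k by omega, Fin.cycShift_card]
    set v := u₀.cycShift (w + 1)
    have hsplit : cycArc (F · x) v (k - 1 - w) * cycArc (F · x) u₀ w
        = cycArc (F · x) v (k - 1) := by
      conv_lhs => rw [← hwrap]
      rw [← cycArc_add, show k - 1 - w + w = k - 1 by omega]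
    rw [← hsplit, Matrix.trace_mul_cycle', mul_assoc]
  simp_rw [list_prod_map_finRange_eq_cycArc _ hk]
  have h := (hasDerivAt_cycArc hF u₀ k).matrix_trace_s2
  rwa [Matrix.trace_sum, sum_congr rfl rotate,
    Fin.sum_range_cycShift_succ u₀ fun v => (F' v * cycArc (F · x) v (k - 1)).trace] at h

end Derivatives

section CycProd

variable {N n k : ℕ} (X : Fin n → Matrix (Fin N) (Fin N) ℂ) (ℓ : Fin k → Fin n)

lemma cycProd_eq_cycArc (u v : Fin k) :
    cycProd X ℓ u v = cycArc (fun r => X (ℓ r)) u (u.cycGap v - 1) := rfl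

lemma cycProd_cycShift_right (u : Fin k) {w : ℕ} (hw : w + 1 < k) :
    cycProd X ℓ u (u.cycShift (w + 1)) = cycArc (fun r => X (ℓ r)) u w := by
  rw [cycProd_eq_cycArc, Fin.cycGap_cycShift _ hw, Nat.add_sub_cancel]

lemma cycProd_cycShift_left (u : Fin k) {w : ℕ} (hw : w + 1 < k) :
    cycProd X ℓ (u.cycShift (w + 1)) u
      = cycArc (fun r => X (ℓ r)) (u.cycShift (w + 1)) (k - 2 - w) := by
  set v := u.cycShift (w + 1)
  have hu : v.cycShift (k - (w + 1)) = u := by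
    rw [Fin.cycShift_cycShift, Nat.add_sub_cancel' hw.le, Fin.cycShift_card]
  have hgap : v.cycGap u = k - (w + 1) := by
    conv_lhs => rw [← hu]
    exact Fin.cycGap_cycShift _ (by omega)
  rw [cycProd_eq_cycArc, hgap, show k - (w + 1) - 1 = k - 2 - w by omega]

end CycProd

section MixedDerivative

attribute [local instance] Matrix.linftyOpNormedRing Matrix.linftyOpNormedAlgebra

theorem deriv_deriv_trace_prod_finRange {N n k : ℕ} (X : Fin n → Matrix (Fin N) (Fin N) ℂ)
    (ℓ : Fin k → Fin n) (B C : Fin k → Matrix (Fin N) (Fin N) ℂ) :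
    deriv (fun t : ℂ => deriv (fun s : ℂ =>
        ((List.finRange k).map fun r => X (ℓ r) + s • B r + t • C r).prod.trace) 0) 0
      = ∑ u, ∑ v ∈ univ.erase u,
          (B u * cycProd X ℓ u v * C v * cycProd X ℓ v u).trace := by
  have inner : ∀ t : ℂ, deriv (fun s : ℂ =>
      ((List.finRange k).map fun r => X (ℓ r) + s • B r + t • C r).prod.trace) 0
      = ∑ u, (B u * cycArc (fun r => X (ℓ r) + t • C r) u (k - 1)).trace := by
    intro t
    refine (hasDerivAt_trace_prod_finRange (F' := B) fun r => ?_).deriv.trans (by simp)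
    exact ((((hasDerivAt_id' (0 : ℂ)).smul_const (B r)).const_add (X (ℓ r))).add_const
      (t • C r)).congr_deriv (one_smul ℂ _)
  have outer : ∀ u, HasDerivAt
      (fun t : ℂ => (B u * cycArc (fun r => X (ℓ r) + t • C r) u (k - 1)).trace)
      (∑ v ∈ univ.erase u, (B u * cycProd X ℓ u v * C v * cycProd X ℓ v u).trace) 0 := by
    intro u
    have hC : ∀ r, HasDerivAt (fun t : ℂ => X (ℓ r) + t • C r) (C r) 0 := fun r =>
      (((hasDerivAt_id' (0 : ℂ)).smul_const (C r)).const_add (X (ℓ r))).congr_deriv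
        (one_smul ℂ _)
    refine ((hasDerivAt_cycArc hC u (k - 1)).const_mul (B u)).matrix_trace_s2.congr_deriv ?_
    rw [mul_sum, Matrix.trace_sum, ← Fin.sum_range_pred_cycShift_succ]
    refine sum_congr rfl fun w hw => ?_
    have hw : w + 1 < k := by have := mem_range.mp hw; omega
    simp [cycProd_cycShift_right X ℓ u hw, cycProd_cycShift_left X ℓ u hw, mul_assoc,
      show k - 1 - 1 - w = k - 2 - w by omega]
  simp_rw [inner]
  exact (HasDerivAt.fun_sum fun u _ => outer u).deriv

end MixedDerivative

lemma Matrix.trace_single_mul_mul_single_mul {m R : Type*} [Fintype m] [DecidableEq m]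
    [CommSemiring R] (P Q : Matrix m m R) (a b c d : m) :
    (single d a (1 : R) * P * single b c 1 * Q).trace = P a b * Q c d := by
  simp [Matrix.trace, Matrix.mul_apply, Matrix.single, ite_and, sum_ite_eq]

theorem stmt2_general (N n k : ℕ)
    (X : Fin n → Matrix (Fin N) (Fin N) ℂ) (ℓ : Fin k → Fin n) (i j : Fin n)
    (a b c d : Fin N) :
    deriv (fun t : ℂ => deriv (fun s : ℂ =>
        Matrix.trace (((List.finRange k).map (fun r =>
          X (ℓ r) + (s * (if ℓ r = j then (1 : ℂ) else 0)) • Matrix.single d a (1 : ℂ)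
            + (t * (if ℓ r = i then (1 : ℂ) else 0)) •
              Matrix.single b c (1 : ℂ))).prod)) 0) 0
      = ∑ p ∈ Finset.univ.filter (fun p : Fin k × Fin k =>
            p.1 ≠ p.2 ∧ ℓ p.1 = j ∧ ℓ p.2 = i),
          (cycProd X ℓ p.1 p.2) a b * (cycProd X ℓ p.2 p.1) c d := by
  simp only [mul_smul]
  rw [deriv_deriv_trace_prod_finRange, sum_filter, Fintype.sum_prod_type]
  refine sum_congr rfl fun u _ => ?_
  conv_rhs => rw [← sum_erase (a := u) _ (by simp)]
  refine sum_congr rfl fun v hv => ?_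
  simp only [smul_mul_assoc, mul_smul_comm, Matrix.trace_smul,
    Matrix.trace_single_mul_mul_single_mul, smul_eq_mul]
  simp [(ne_of_mem_erase hv).symm, ite_and]

/-- Directed-pairing formula for the second noncommutative derivative
`∂^{x_i} ∘ ∂^{x_j}` of the trace of a monomial: the mixed second partial derivative at `(0,0)`
of `G(s,t) = Tr ∏_r (X_{ℓ(r)} + s·δ_{ℓ(r),j}·E(d,a) + t·δ_{ℓ(r),i}·E(b,c))` equals the sum
over all ordered pairs `(u,v)`, `u ≠ v`, `ℓ(u) = j`, `ℓ(v) = i` of `(π₁)_{ab}·(π₂)_{cd}`. -/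
theorem stmt2 (N n k : ℕ) (hN : 0 < N) (hn : 0 < n) (hk : 2 ≤ k)
    (X : Fin n → Matrix (Fin N) (Fin N) ℂ) (ℓ : Fin k → Fin n) (i j : Fin n)
    (a b c d : Fin N) :
    deriv (fun t : ℂ => deriv (fun s : ℂ =>
        Matrix.trace (((List.finRange k).map (fun r =>
          X (ℓ r) + (s * (if ℓ r = j then (1 : ℂ) else 0)) • Matrix.single d a (1 : ℂ)
            + (t * (if ℓ r = i then (1 : ℂ) else 0)) •
              Matrix.single b c (1 : ℂ))).prod)) 0) 0
      = ∑ p ∈ Finset.univ.filter (fun p : Fin k × Fin k =>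
            p.1 ≠ p.2 ∧ ℓ p.1 = j ∧ ℓ p.2 = i),
          (cycProd X ℓ p.1 p.2) a b * (cycProd X ℓ p.2 p.1) c d :=
  stmt2_general N n k X ℓ i j a b c d
end

section
/- Let a, b ∈ ℕ, m = 2a + 2b, and let w : Fin m → Fin 2 be a word taking the value 0 exactly 2a times and the value 1 exactly 2b times. Then the signed sum Σ_χ (−1)^{cr(χ)}, taken over all letter-preserving perfect matchings χ of Fin m for w, is an odd integer; in particular it is nonzero. (This is the combinatorial core of the nonvanishing of single-trace coefficients in the Spectral Action of a 2-dimensional fuzzy geometry.) -/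
/-- The letter-preserving perfect matchings of `Fin m` for the word `w`, encoded as
fixed-point-free involutive permutations `f` (the matching being the set of pairs `{x, f x}`)
with `w (f x) = w x` for all `x`. -/
def lpMatchings (m : ℕ) (w : Fin m → Fin 2) : Finset (Equiv.Perm (Fin m)) :=
  Finset.univ.filter (fun f =>
    (∀ x, f x ≠ x) ∧ (∀ x, f (f x) = x) ∧ (∀ x, w (f x) = w x))

/-- The crossing number of a matching (encoded as an involution `f`): the number of pairs of
distinct chords `{u, f u}`, `{u', f u'}` (each written with its smaller element first) with
`u < u' < f u < f u'`. -/
def crossNum {m : ℕ} (f : Equiv.Perm (Fin m)) : ℕ :=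
  (Finset.univ.filter (fun p : Fin m × Fin m =>
    p.1 < f p.1 ∧ p.2 < f p.2 ∧ p.1 < p.2 ∧ p.2 < f p.1 ∧ f p.1 < f p.2)).card

/-!
Each term `(-1) ^ cr χ` is odd, so the signed sum has the parity of the number of
letter-preserving matchings, and that number is odd (it is `(2a-1)!! (2b-1)!!`).
Inductively: the partner of a fixed position `x` is one of the odd number of other positions
`y` carrying the letter of `x`, and the matchings in which `x` is paired with `y` correspond to
the letter-preserving matchings of the remaining positions, whose letter counts are still even.
-/

open Finset Equiv

lemma odd_sum_neg_one_pow_iff {ι : Type*} (t : Finset ι) (k : ι → ℕ) :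
    Odd (∑ i ∈ t, (-1 : ℤ) ^ k i) ↔ Odd t.card := by
  rw [← ZMod.intCast_eq_one_iff_odd, ← ZMod.natCast_eq_one_iff_odd]
  push_cast
  simp

variable {α β : Type*} [DecidableEq α]

lemma comp_swap_of_eq {w : α → β} {x y : α} (hw : w x = w y) : w ∘ swap x y = w := by
  funext z
  simp only [Function.comp_apply, swap_apply_def]
  split_ifs with h₁ h₂ <;> simp [*]

variable [DecidableEq β]

lemma even_card_filter_erase_erase {w : α → β} {s : Finset α} {x y : α}
    (hs : ∀ c, Even (s.filter (w · = c)).card) (hxy : x ≠ y)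
    (hx : x ∈ s) (hy : y ∈ s) (hw : w x = w y) (c : β) :
    Even (((s.erase x).erase y).filter (w · = c)).card := by
  rw [filter_erase, filter_erase]
  by_cases hc : w x = c
  · have hxc : x ∈ s.filter (w · = c) := mem_filter.mpr ⟨hx, hc⟩
    have hyc : y ∈ (s.filter (w · = c)).erase x := by simp [hxy.symm, hy, ← hw, hc]
    rw [card_erase_of_mem hyc, card_erase_of_mem hxc]
    have h2 : 2 ≤ (s.filter (w · = c)).card :=
      one_lt_card.mpr ⟨x, hxc, y, mem_of_mem_erase hyc, hxy⟩
    obtain ⟨k, hk⟩ := hs c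
    exact ⟨k - 1, by omega⟩
  · rw [erase_eq_of_notMem (by simp [← hw, hc]), erase_eq_of_notMem (by simp [hc])]
    exact hs c

variable [Fintype α]

/-- Letter-preserving matchings of the positions in `s`, as involutions with support `s`. -/
def lpMatchingsOn (w : α → β) (s : Finset α) : Finset (Perm α) :=
  univ.filter fun f => f.support = s ∧ f * f = 1 ∧ w ∘ f = w

variable {w : α → β} {s : Finset α} {f g : Perm α} {x y : α}

lemma mem_lpMatchingsOn : f ∈ lpMatchingsOn w s ↔ f.support = s ∧ f * f = 1 ∧ w ∘ f = w := by
  simp [lpMatchingsOn]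

lemma lpMatchingsOn_empty : lpMatchingsOn w ∅ = {1} := by
  ext f
  simp only [mem_lpMatchingsOn, Perm.support_eq_empty_iff, mem_singleton]
  constructor
  · exact fun h => h.1
  · rintro rfl; simp

lemma apply_mem_erase_of_mem_lpMatchingsOn (hf : f ∈ lpMatchingsOn w s) (hx : x ∈ s) :
    f x ∈ (s.filter (w · = w x)).erase x := by
  obtain ⟨hsupp, -, hw⟩ := mem_lpMatchingsOn.mp hf
  subst hsupp
  simp only [mem_erase, mem_filter]
  exact ⟨Perm.mem_support.mp hx, Perm.apply_mem_support.mpr hx, congrFun hw x⟩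

lemma swap_mul_mem_lpMatchingsOn_iff (hxy : x ≠ y) (hx : x ∈ s) (hy : y ∈ s) (hw : w x = w y)
    (hgx : g x = x) (hgy : g y = y) :
    swap x y * g ∈ lpMatchingsOn w s ↔ g ∈ lpMatchingsOn w ((s.erase x).erase y) := by
  have hdisj : (swap x y).Disjoint g := by
    rw [Perm.disjoint_iff_disjoint_support, Perm.support_swap hxy]
    simp [Finset.disjoint_left, hgx, hgy]
  have hx' : x ∉ g.support := Perm.notMem_support.mpr hgx
  have hy' : y ∉ g.support := Perm.notMem_support.mpr hgy
  simp only [mem_lpMatchingsOn, hdisj.support_mul, Perm.support_swap hxy, Perm.coe_mul,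
    ← Function.comp_assoc, comp_swap_of_eq hw]
  have hsq : swap x y * g * (swap x y * g) = g * g := by
    rw [mul_assoc, ← mul_assoc g, ← hdisj.commute.eq, mul_assoc, swap_mul_self_mul]
  rw [hsq]
  refine and_congr ?_ Iff.rfl
  constructor
  · rintro rfl
    ext z
    by_cases hzx : z = x <;> by_cases hzy : z = y <;> simp_all
  · intro h
    rw [h]
    ext z
    by_cases hzx : z = x <;> by_cases hzy : z = y <;> simp_all

lemma card_filter_apply_eq_lpMatchingsOn (hxy : x ≠ y) (hx : x ∈ s) (hy : y ∈ s)
    (hw : w x = w y) :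
    ((lpMatchingsOn w s).filter (· x = y)).card =
      (lpMatchingsOn w ((s.erase x).erase y)).card := by
  refine card_nbij' (swap x y * ·) (swap x y * ·) ?_ ?_ (fun _ _ => swap_mul_self_mul x y _)
    (fun _ _ => swap_mul_self_mul x y _)
  · intro f hf
    obtain ⟨hf, hfx⟩ := mem_filter.mp hf
    have hfy : f y = x := by
      rw [← hfx, ← Perm.mul_apply, ((mem_lpMatchingsOn.mp hf).2.1), Perm.one_apply]
    rw [mem_coe, ← swap_mul_mem_lpMatchingsOn_iff hxy hx hy hw] <;>
      simp [swap_mul_self_mul, hf, hfx, hfy]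
  · intro g hg
    have hg' := (mem_lpMatchingsOn.mp hg).1
    have hgx : g x = x := Perm.notMem_support.mp (by simp [hg'])
    have hgy : g y = y := Perm.notMem_support.mp (by simp [hg'])
    simpa [swap_mul_mem_lpMatchingsOn_iff hxy hx hy hw hgx hgy, hgx] using hg

theorem odd_card_lpMatchingsOn (s : Finset α) (hs : ∀ c, Even (s.filter (w · = c)).card) :
    Odd (lpMatchingsOn w s).card := by
  induction s using Finset.strongInduction with
  | H s ih =>
  obtain rfl | ⟨x, hx⟩ := s.eq_empty_or_nonempty
  · simp [lpMatchingsOn_empty]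
  rw [card_eq_sum_card_fiberwise fun f hf => apply_mem_erase_of_mem_lpMatchingsOn hf hx,
    odd_sum_iff_odd_card_odd]
  have hfibers : ∀ y ∈ (s.filter (w · = w x)).erase x,
      Odd ((lpMatchingsOn w s).filter (· x = y)).card := by
    intro y hy
    obtain ⟨hyx, hy, hwy⟩ : y ≠ x ∧ y ∈ s ∧ w y = w x := by simpa [and_assoc] using hy
    rw [card_filter_apply_eq_lpMatchingsOn hyx.symm hx hy hwy.symm]
    exact ih _ ((erase_subset _ _).trans_ssubset (erase_ssubset hx))
      (even_card_filter_erase_erase hs hyx.symm hx hy hwy.symm)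
  have hxx : x ∈ s.filter (w · = w x) := mem_filter.mpr ⟨hx, rfl⟩
  rw [filter_true_of_mem hfibers, card_erase_of_mem hxx]
  exact Nat.Even.sub_odd (card_pos.mpr ⟨x, hxx⟩) (hs (w x)) odd_one

/-- If `w : Fin (2a+2b) → Fin 2` takes the value `0` exactly `2a` times and
the value `1` exactly `2b` times, then the signed sum `Σ_χ (−1)^{cr(χ)}` over letter-preserving
perfect matchings `χ` for `w` is an odd integer; in particular it is nonzero. -/
theorem stmt11 (a b : ℕ) (w : Fin (2 * a + 2 * b) → Fin 2)
    (h0 : (Finset.univ.filter (fun r => w r = 0)).card = 2 * a)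
    (h1 : (Finset.univ.filter (fun r => w r = 1)).card = 2 * b) :
    Odd (∑ f ∈ lpMatchings (2 * a + 2 * b) w, (-1 : ℤ) ^ crossNum f) ∧
      (∑ f ∈ lpMatchings (2 * a + 2 * b) w, (-1 : ℤ) ^ crossNum f) ≠ 0 := by
  have hM : lpMatchings (2 * a + 2 * b) w = lpMatchingsOn w univ := by
    ext f
    simp [lpMatchings, lpMatchingsOn, eq_univ_iff_forall, Perm.ext_iff, funext_iff]
  have hodd : Odd (∑ f ∈ lpMatchings (2 * a + 2 * b) w, (-1 : ℤ) ^ crossNum f) := by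
    rw [odd_sum_neg_one_pow_iff, hM]
    refine odd_card_lpMatchingsOn univ fun c => ?_
    fin_cases c
    · simp [h0]
    · simp [h1]
  exact ⟨hodd, fun h => by simp [h] at hodd⟩
end
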